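/- Let c, c', c'', h* ≥ 0 with c'' ≥ 3c' + log 2, let (t_n)_{n ∈ M} be a sequence of nonnegative reals (M an initial segment of ℕ) with t_n - t_{n-1} ≥ c'' for n ≥ 1, and let u_n : [0,∞) → [0,∞) be maps with u₀ constant equal to h*, and for n ≥ 1: u_n(t) = h* if t > t_n, and u_n(t) = c·e^{t-t_n} + sup{u_{n-1}(s) : s ≥ 0, |s-t| ≤ c'·e^{t-t_n}} if t ≤ t_n. Then for every t ≥ 0 and every n ∈ M, h* ≤ u_n(t) ≤ h* + 2c. -/
import Mathlib


/-- Lemma 4.8: let `c, c', c'', h* ≥ 0` with `c'' ≥ 3c' + log 2`, let `M` be an initial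
segment of ℕ, `(t n)` nonnegative reals with `t n - t (n-1) ≥ c''` for `n ∈ M - {0}`,
and `(u n)` maps `[0,∞) → [0,∞)` with `u 0 ≡ h*` and, for `n ∈ M - {0}`:
`u n t = h*` if `t > t n`, and
`u n t = c e^{t - t n} + sup {u (n-1) s | s ≥ 0, |s - t| ≤ c' e^{t - t n}}` if `t ≤ t n`.
Then `h* ≤ u n t ≤ h* + 2c` for all `t ≥ 0` and `n ∈ M`. -/
theorem stmt_13 (c c' c'' hstar : ℝ)
    (hc : 0 ≤ c) (hc' : 0 ≤ c') (hc'' : 0 ≤ c'') (hhstar : 0 ≤ hstar)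
    (hbig : c'' ≥ 3 * c' + Real.log 2)
    (M : Set ℕ) (hM : ∀ m n : ℕ, m ≤ n → n ∈ M → m ∈ M)
    (t : ℕ → ℝ) (ht0 : ∀ n ∈ M, 0 ≤ t n)
    (htgap : ∀ n ∈ M, n ≠ 0 → t n - t (n - 1) ≥ c'')
    (u : ℕ → ℝ → ℝ)
    (hupos : ∀ n ∈ M, ∀ s : ℝ, 0 ≤ s → 0 ≤ u n s)
    (hu0 : ∀ s : ℝ, 0 ≤ s → u 0 s = hstar)
    (hurec : ∀ n ∈ M, n ≠ 0 → ∀ s : ℝ, 0 ≤ s →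
      (t n < s → u n s = hstar) ∧
      (s ≤ t n → u n s = c * Real.exp (s - t n) +
        sSup {v : ℝ | ∃ s' : ℝ, 0 ≤ s' ∧ |s' - s| ≤ c' * Real.exp (s - t n) ∧
          v = u (n - 1) s'})) :
    ∀ n ∈ M, ∀ s : ℝ, 0 ≤ s → hstar ≤ u n s ∧ u n s ≤ hstar + 2 * c := by
  have hlog2 : (0:ℝ) < Real.log 2 := Real.log_pos (by norm_num)
  -- strengthened invariant
  have key : ∀ n, n ∈ M → ∀ s : ℝ, 0 ≤ s →
      hstar ≤ u n s ∧
      (s ≤ t n → u n s ≤ hstar + 2 * c - c * Real.exp (s - t n)) := by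
    intro n
    induction n with
    | zero =>
      intro _ s hs
      rw [hu0 s hs]
      refine ⟨le_refl _, fun hst => ?_⟩
      have hE : Real.exp (s - t 0) ≤ 1 := Real.exp_le_one_iff.mpr (by linarith)
      nlinarith
    | succ m ih =>
      intro hmem s hs
      have hm : m ∈ M := hM m (m + 1) (by omega) hmem
      obtain ⟨h1, h2⟩ := hurec (m + 1) hmem (Nat.succ_ne_zero m) s hs
      by_cases hst : t (m + 1) < s
      · rw [h1 hst]
        exact ⟨le_refl _, fun h => absurd h (not_le.mpr hst)⟩
      push_neg at hst
      have hrec := h2 hst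
      simp only [Nat.add_sub_cancel] at hrec
      have hEpos : 0 < Real.exp (s - t (m + 1)) := Real.exp_pos _
      have hE1 : Real.exp (s - t (m + 1)) ≤ 1 := Real.exp_le_one_iff.mpr (by linarith)
      set E : ℝ := Real.exp (s - t (m + 1)) with hEdef
      set S : Set ℝ := {v : ℝ | ∃ s' : ℝ, 0 ≤ s' ∧ |s' - s| ≤ c' * E ∧ v = u m s'}
        with hSdef
      have memS : u m s ∈ S := ⟨s, hs, by simp [abs_nonneg]; positivity, rfl⟩
      -- every element of S is at most hstar + 2c - 2cE
      have hbound : ∀ v ∈ S, v ≤ hstar + 2 * c - 2 * c * E := by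
        rintro v ⟨s', hs', habs, rfl⟩
        rcases Nat.eq_zero_or_pos m with hm0 | hmpos
        · subst hm0
          rw [hu0 s' hs']
          nlinarith
        · have hmne : m ≠ 0 := Nat.pos_iff_ne_zero.mp hmpos
          by_cases hcase : t m < s'
          · rw [(hurec m hm hmne s' hs').1 hcase]
            nlinarith
          · push_neg at hcase
            have hind := (ih hm s' hs').2 hcase
            -- key exponential comparison: 2 E ≤ exp (s' - t m)
            have hss' : s - s' ≤ c' * E := by
              have := abs_le.mp habs
              linarith [this.1]
            have hgap : t (m + 1) - t m ≥ c'' := by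
              have := htgap (m + 1) hmem (Nat.succ_ne_zero m)
              simpa using this
            have hc'E : c' * E ≤ c' := by nlinarith
            have hexp : s - t (m + 1) ≤ (s' - t m) - Real.log 2 := by linarith
            have h2E : 2 * E ≤ Real.exp (s' - t m) := by
              have : E ≤ Real.exp ((s' - t m) - Real.log 2) := Real.exp_le_exp.mpr hexp
              rw [Real.exp_sub, Real.exp_log (by norm_num : (0:ℝ) < 2)] at this
              have hp := Real.exp_pos (s' - t m)
              nlinarith
            nlinarith
      have hne : S.Nonempty := ⟨u m s, memS⟩
      have hbdd : BddAbove S := ⟨hstar + 2 * c - 2 * c * E, fun v hv => hbound v hv⟩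
      have hsup_le : sSup S ≤ hstar + 2 * c - 2 * c * E := csSup_le hne hbound
      have hle_sup : u m s ≤ sSup S := le_csSup hbdd memS
      have hlow : hstar ≤ u m s := (ih hm s hs).1
      constructor
      · rw [hrec]
        nlinarith
      · intro _
        rw [hrec]
        linarith
  intro n hn s hs
  refine ⟨(key n hn s hs).1, ?_⟩
  rcases Nat.eq_zero_or_pos n with h0 | hpos
  · subst h0
    rw [hu0 s hs]
    linarith
  · by_cases hst : t n < s
    · rw [(hurec n hn (Nat.pos_iff_ne_zero.mp hpos) s hs).1 hst]
      linarith
    · push_neg at hst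
      have := (key n hn s hs).2 hst
      have hE : 0 < Real.exp (s - t n) := Real.exp_pos _
      nlinarith
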